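/- Let n ≥ 3. The real vector space of symmetric trilinear forms τ : su(n) × su(n) × su(n) → ℝ that are invariant under conjugation by SU(n), i.e. τ(UXU⁻¹, UYU⁻¹, UZU⁻¹) = τ(X,Y,Z) for all U ∈ SU(n), is one-dimensional and is spanned by σ. -/

import Mathlib

open Matrix

/-- The square complex matrices of size `n`. -/
abbrev Mat (n : ℕ) := Matrix (Fin n) (Fin n) ℂ

/-- `su n`: skew-Hermitian traceless `n × n` complex matrices, as a real subspace of `Mat n`. -/
noncomputable def su (n : ℕ) : Submodule ℝ (Mat n) where
  carrier := {A | Aᴴ = -A ∧ A.trace = 0}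
  add_mem' := by
    rintro a b ⟨ha1, ha2⟩ ⟨hb1, hb2⟩
    exact ⟨by rw [conjTranspose_add, ha1, hb1, neg_add], by rw [trace_add, ha2, hb2, add_zero]⟩
  zero_mem' := ⟨by simp, by simp⟩
  smul_mem' := by
    rintro c a ⟨h1, h2⟩
    exact ⟨by rw [conjTranspose_smul, h1, star_trivial, smul_neg], by rw [trace_smul, h2, smul_zero]⟩

/-- The special unitary group `SU(n)`. -/
abbrev SU (n : ℕ) := Matrix.specialUnitaryGroup (Fin n) ℂ

lemma SU.star_mul_self {n : ℕ} (U : SU n) : star (U : Mat n) * (U : Mat n) = 1 := U.2.1.1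

lemma SU.inv_coe {n : ℕ} (U : SU n) : (U : Mat n)⁻¹ = star (U : Mat n) :=
  Matrix.inv_eq_left_inv (SU.star_mul_self U)

/-- Conjugation `U • A := U * A * U⁻¹` at the level of matrices. -/
noncomputable def conjMat {n : ℕ} (U : SU n) (A : Mat n) : Mat n := (U : Mat n) * A * (U : Mat n)⁻¹

lemma conjMat_mem {n : ℕ} (U : SU n) {A : Mat n} (hA : A ∈ su n) : conjMat U A ∈ su n := by
  obtain ⟨h1, h2⟩ := hA
  have hs : (U : Mat n) * (star (U : Mat n)) = 1 := by
    rw [mul_eq_one_comm]; exact SU.star_mul_self U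
  constructor
  · rw [conjMat, SU.inv_coe, Matrix.star_eq_conjTranspose, conjTranspose_mul, conjTranspose_mul,
      conjTranspose_conjTranspose, h1]
    simp [Matrix.mul_assoc, Matrix.neg_mul, Matrix.mul_neg]
  · rw [conjMat, SU.inv_coe, trace_mul_cycle, SU.star_mul_self U, Matrix.one_mul, h2]

/-- The conjugation action of `SU(n)` on `su(n)`. -/
noncomputable def act {n : ℕ} (U : SU n) (x : su n) : su n := ⟨conjMat U x.1, conjMat_mem U x.2⟩

lemma act_add {n : ℕ} (U : SU n) (x y : su n) : act U (x + y) = act U x + act U y := by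
  apply Subtype.ext
  show conjMat U (x.1 + y.1) = conjMat U x.1 + conjMat U y.1
  simp [conjMat, Matrix.mul_add, Matrix.add_mul]

lemma act_smul {n : ℕ} (U : SU n) (r : ℝ) (x : su n) : act U (r • x) = r • act U x := by
  apply Subtype.ext
  show conjMat U (r • x.1) = r • conjMat U x.1
  simp [conjMat, Matrix.smul_mul, Matrix.mul_smul]

lemma act_zero {n : ℕ} (U : SU n) : act U (0 : su n) = 0 := by
  apply Subtype.ext
  show conjMat U 0 = 0
  simp [conjMat]

/-- `τ : su(n)³ → ℝ` is a symmetric trilinear form invariant under conjugation by `SU(n)`. -/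
def IsSymmTrilinInv (n : ℕ) (τ : ↥(su n) × ↥(su n) × ↥(su n) → ℝ) : Prop :=
  (∀ x y z, τ (x, y, z) = τ (y, x, z)) ∧
  (∀ x y z, τ (x, y, z) = τ (x, z, y)) ∧
  (∀ x x' y z, τ (x + x', y, z) = τ (x, y, z) + τ (x', y, z)) ∧
  (∀ (r : ℝ) x y z, τ (r • x, y, z) = r * τ (x, y, z)) ∧
  (∀ x y y' z, τ (x, y + y', z) = τ (x, y, z) + τ (x, y', z)) ∧
  (∀ (r : ℝ) x y z, τ (x, r • y, z) = r * τ (x, y, z)) ∧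
  (∀ x y z z', τ (x, y, z + z') = τ (x, y, z) + τ (x, y, z')) ∧
  (∀ (r : ℝ) x y z, τ (x, y, r • z) = r * τ (x, y, z)) ∧
  (∀ (U : SU n) x y z, τ (act U x, act U y, act U z) = τ (x, y, z))

/-- The real vector space of `SU(n)`-invariant symmetric trilinear forms on `su(n)`. -/
noncomputable def InvTrilinSpace (n : ℕ) : Submodule ℝ ((↥(su n) × ↥(su n) × ↥(su n)) → ℝ) where
  carrier := {τ | IsSymmTrilinInv n τ}
  add_mem' := by
    rintro τ τ' ⟨h1, h2, h3, h4, h5, h6, h7, h8, h9⟩ ⟨g1, g2, g3, g4, g5, g6, g7, g8, g9⟩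
    refine ⟨fun x y z => ?_, fun x y z => ?_, fun x x' y z => ?_, fun r x y z => ?_,
      fun x y y' z => ?_, fun r x y z => ?_, fun x y z z' => ?_, fun r x y z => ?_,
      fun U x y z => ?_⟩ <;> simp only [Pi.add_apply]
    · rw [h1, g1]
    · rw [h2, g2]
    · rw [h3, g3]; ring
    · rw [h4, g4]; ring
    · rw [h5, g5]; ring
    · rw [h6, g6]; ring
    · rw [h7, g7]; ring
    · rw [h8, g8]; ring
    · rw [h9, g9]
  zero_mem' := by
    refine ⟨fun x y z => rfl, fun x y z => rfl, ?_, ?_, ?_, ?_, ?_, ?_, fun U x y z => rfl⟩ <;>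
      intros <;> simp
  smul_mem' := by
    rintro c τ ⟨h1, h2, h3, h4, h5, h6, h7, h8, h9⟩
    refine ⟨fun x y z => ?_, fun x y z => ?_, fun x x' y z => ?_, fun r x y z => ?_,
      fun x y y' z => ?_, fun r x y z => ?_, fun x y z z' => ?_, fun r x y z => ?_,
      fun U x y z => ?_⟩ <;> simp only [Pi.smul_apply, smul_eq_mul]
    · rw [h1]
    · rw [h2]
    · rw [h3]; ring
    · rw [h4]; ring
    · rw [h5]; ring
    · rw [h6]; ring
    · rw [h7]; ring
    · rw [h8]; ring
    · rw [h9]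
  
/-- The invariant symmetric trilinear form `σ(X,Y,Z) = i(tr(XYZ) + tr(XZY))`,
which is real-valued on `su(n)`. -/
noncomputable def sigma3 (n : ℕ) : ↥(su n) × ↥(su n) × ↥(su n) → ℝ :=
  fun t =>
    (Complex.I * (((t.1 : Mat n) * (t.2.1 : Mat n) * (t.2.2 : Mat n)).trace +
      ((t.1 : Mat n) * (t.2.2 : Mat n) * (t.2.1 : Mat n)).trace)).re

section Aux
variable {n : ℕ}

/-- Diagonal matrix with entries `lam j * I`. -/
noncomputable def diagMat (lam : Fin n → ℝ) : Mat n :=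
  Matrix.diagonal (fun j => (lam j : ℂ) * Complex.I)

lemma diagMat_mem {lam : Fin n → ℝ} (h : ∑ j, lam j = 0) : diagMat lam ∈ su n := by
  constructor
  · rw [diagMat, diagonal_conjTranspose]
    ext i j
    rcases eq_or_ne i j with rfl | hij
    · simp [Complex.star_def, _root_.map_mul, Complex.conj_I, Complex.conj_ofReal, mul_neg]
    · simp [Matrix.diagonal_apply_ne _ hij]
  · rw [diagMat, trace_diagonal, ← Finset.sum_mul]
    rw [show (∑ j, ((lam j : ℂ))) = ((∑ j, lam j : ℝ) : ℂ) by push_cast; rfl, h]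
    simp

lemma diagMat_add (f g : Fin n → ℝ) : diagMat (f + g) = diagMat f + diagMat g := by
  ext i j
  rcases eq_or_ne i j with rfl | hij
  · simp [diagMat]; ring
  · simp [diagMat, Matrix.diagonal_apply_ne _ hij]

lemma diagMat_smul (r : ℝ) (f : Fin n → ℝ) : diagMat (r • f) = r • diagMat f := by
  ext i j
  rcases eq_or_ne i j with rfl | hij
  · simp [diagMat, Complex.real_smul]; ring
  · simp [diagMat, Matrix.diagonal_apply_ne _ hij]

/-- Projection onto sum-zero vectors. -/
noncomputable def prv (lam : Fin n → ℝ) : Fin n → ℝ := fun j => lam j - (∑ k, lam k) / n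

lemma prv_sum [NeZero n] (lam : Fin n → ℝ) : ∑ j, prv lam j = 0 := by
  have hn : (n : ℝ) ≠ 0 := Nat.cast_ne_zero.mpr (NeZero.ne n)
  simp only [prv, Finset.sum_sub_distrib, Finset.sum_const, Finset.card_univ, Fintype.card_fin,
    nsmul_eq_mul]
  field_simp
  ring

lemma prv_eq_self {lam : Fin n → ℝ} (h : ∑ j, lam j = 0) : prv lam = lam := by
  funext j; simp [prv, h]

lemma prv_add (f g : Fin n → ℝ) : prv (f + g) = prv f + prv g := by
  funext j; simp [prv, Finset.sum_add_distrib]; ring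

lemma prv_smul (r : ℝ) (f : Fin n → ℝ) : prv (r • f) = r • prv f := by
  funext j; simp [prv, ← Finset.mul_sum]; ring

lemma prv_comp (lam : Fin n → ℝ) (σ : Equiv.Perm (Fin n)) :
    prv (lam ∘ σ) = (prv lam) ∘ σ := by
  funext j
  simp [prv, Equiv.sum_comp σ lam]

/-- The linear parametrization of diagonal elements of `su n`. -/
noncomputable def Esu [NeZero n] (lam : Fin n → ℝ) : su n :=
  ⟨diagMat (prv lam), diagMat_mem (prv_sum lam)⟩

lemma Esu_coe [NeZero n] {lam : Fin n → ℝ} (h : ∑ j, lam j = 0) :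
    ((Esu lam : su n) : Mat n) = diagMat lam := by
  simp [Esu, prv_eq_self h]

lemma Esu_add [NeZero n] (f g : Fin n → ℝ) : Esu (f + g) = Esu f + Esu g := by
  apply Subtype.ext
  show diagMat (prv (f + g)) = diagMat (prv f) + diagMat (prv g)
  rw [prv_add, diagMat_add]

lemma Esu_smul [NeZero n] (r : ℝ) (f : Fin n → ℝ) : Esu (r • f) = r • Esu f := by
  apply Subtype.ext
  show diagMat (prv (r • f)) = r • diagMat (prv f)
  rw [prv_smul, diagMat_smul]

lemma Esu_zero [NeZero n] : Esu (0 : Fin n → ℝ) = 0 := by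
  have := Esu_smul (n := n) 0 0
  simpa using this

end Aux
section Tri
variable {n : ℕ} {τ : ↥(su n) × ↥(su n) × ↥(su n) → ℝ}

lemma tri_zero₁ (hτ : IsSymmTrilinInv n τ) (y z : su n) : τ (0, y, z) = 0 := by
  have := hτ.2.2.2.1 0 y y z; simpa using this

lemma tri_zero₂ (hτ : IsSymmTrilinInv n τ) (x z : su n) : τ (x, 0, z) = 0 := by
  have := hτ.2.2.2.2.2.1 0 x x z; simpa using this

lemma tri_zero₃ (hτ : IsSymmTrilinInv n τ) (x y : su n) : τ (x, y, 0) = 0 := by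
  have := hτ.2.2.2.2.2.2.2.1 0 x y x; simpa using this

lemma tri_sum₁ (hτ : IsSymmTrilinInv n τ) {ι : Type*} (s : Finset ι) (f : ι → su n)
    (y z : su n) : τ (∑ j ∈ s, f j, y, z) = ∑ j ∈ s, τ (f j, y, z) := by
  classical
  induction s using Finset.cons_induction with
  | empty => simpa using tri_zero₁ hτ y z
  | cons a s ha ih => rw [Finset.sum_cons, Finset.sum_cons, hτ.2.2.1, ih]

lemma tri_sum₂ (hτ : IsSymmTrilinInv n τ) {ι : Type*} (s : Finset ι) (x : su n) (f : ι → su n)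
    (z : su n) : τ (x, ∑ j ∈ s, f j, z) = ∑ j ∈ s, τ (x, f j, z) := by
  classical
  induction s using Finset.cons_induction with
  | empty => simpa using tri_zero₂ hτ x z
  | cons a s ha ih => rw [Finset.sum_cons, Finset.sum_cons, hτ.2.2.2.2.1, ih]

lemma tri_sum₃ (hτ : IsSymmTrilinInv n τ) {ι : Type*} (s : Finset ι) (x y : su n)
    (f : ι → su n) : τ (x, y, ∑ j ∈ s, f j) = ∑ j ∈ s, τ (x, y, f j) := by
  classical
  induction s using Finset.cons_induction with
  | empty => simpa using tri_zero₃ hτ x y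
  | cons a s ha ih => rw [Finset.sum_cons, Finset.sum_cons, hτ.2.2.2.2.2.2.1, ih]

/-- Polarization: a symmetric trilinear form vanishing on the diagonal is zero. -/
lemma tri_polarize (hτ : IsSymmTrilinInv n τ) (h : ∀ x : su n, τ (x, x, x) = 0)
    (x y z : su n) : τ (x, y, z) = 0 := by
  obtain ⟨h1, h2, h3, h4, h5, h6, h7, h8, _⟩ := hτ
  have neg₂ : ∀ x y z : su n, τ (x, -y, z) = -τ (x, y, z) := by
    intro x y z; have := h6 (-1) x y z; rw [neg_one_smul ℝ y] at this; simpa using this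
  have neg₃ : ∀ x y z : su n, τ (x, y, -z) = -τ (x, y, z) := by
    intro x y z; have := h8 (-1) x y z; rw [neg_one_smul ℝ z] at this; simpa using this
  have key2 : ∀ a b : su n, τ (a, a, b) + τ (a, b, b) = 0 := by
    intro a b
    have q1 : τ (a, b, a) = τ (a, a, b) := h2 a b a
    have q2 : τ (b, a, a) = τ (a, a, b) := by rw [h1 b a a, q1]
    have q3 : τ (b, a, b) = τ (a, b, b) := h1 b a b
    have q4 : τ (b, b, a) = τ (a, b, b) := by rw [h2 b b a, q3]
    have e : τ (a + b, a + b, a + b) =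
        τ (a, a, a) + τ (a, a, b) + τ (a, b, a) + τ (a, b, b)
        + τ (b, a, a) + τ (b, a, b) + τ (b, b, a) + τ (b, b, b) := by
      rw [h3, h5, h5, h7, h7, h7, h7]; ring
    rw [h (a + b), h a, h b, q1, q2, q3, q4] at e
    linarith
  have key : ∀ a b : su n, τ (a, a, b) = 0 := by
    intro a b
    have e1 := key2 a b
    have e2 := key2 a (-b)
    rw [neg₃, neg₂ a b (-b), neg₃, neg_neg] at e2
    linarith
  have e : τ (x + y, x + y, z) =
      τ (x, x, z) + τ (x, y, z) + τ (y, x, z) + τ (y, y, z) := by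
    rw [h3, h5, h5]; ring
  rw [key (x + y) z, key x z, key y z, h1 y x z] at e
  linarith

end Tri
section Perm
variable {n : ℕ}

/-- The complex sign of a permutation. -/
noncomputable def signC (σ : Equiv.Perm (Fin n)) : ℂ := ((Equiv.Perm.sign σ : ℤ) : ℂ)

lemma signC_mul_self (σ : Equiv.Perm (Fin n)) : signC σ * signC σ = 1 := by
  rcases Int.units_eq_one_or (Equiv.Perm.sign σ) with h | h <;> simp [signC, h]

lemma signC_star (σ : Equiv.Perm (Fin n)) : star (signC σ) = signC σ := star_intCast _

/-- Diagonal sign-correction matrix. -/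
noncomputable def Wmat (n : ℕ) [NeZero n] (σ : Equiv.Perm (Fin n)) : Mat n :=
  Matrix.diagonal (fun j => if j = 0 then signC σ else 1)

lemma Wmat_star [NeZero n] (σ : Equiv.Perm (Fin n)) : star (Wmat n σ) = Wmat n σ := by
  rw [Wmat, Matrix.star_eq_conjTranspose, Matrix.diagonal_conjTranspose]
  ext i j
  rcases eq_or_ne i j with rfl | hij
  · by_cases h0 : i = 0 <;> simp [h0, signC_star]
  · simp [Matrix.diagonal_apply_ne _ hij]

lemma Wmat_mul_self [NeZero n] (σ : Equiv.Perm (Fin n)) : Wmat n σ * Wmat n σ = 1 := by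
  rw [Wmat, Matrix.diagonal_mul_diagonal]
  ext i j
  rcases eq_or_ne i j with rfl | hij
  · by_cases h0 : i = 0 <;> simp [h0, signC_mul_self, Matrix.one_apply]
  · simp [Matrix.diagonal_apply_ne _ hij, Matrix.one_apply_ne hij]

/-- The complex permutation matrix. -/
noncomputable def Pmat (n : ℕ) (σ : Equiv.Perm (Fin n)) : Mat n := σ.toPEquiv.toMatrix

lemma Pmat_star (σ : Equiv.Perm (Fin n)) : star (Pmat n σ) = Pmat n σ⁻¹ := by
  ext i j
  simp only [Matrix.star_apply, Pmat, PEquiv.toMatrix_toPEquiv_apply, Pi.single_apply, Matrix.one_apply]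
  rcases eq_or_ne (σ j) i with hc | hc
  · rw [if_pos hc.symm, if_pos (by rw [← hc]; exact (σ.symm_apply_apply j).symm)]; simp
  · rw [if_neg (Ne.symm hc), if_neg (fun hh => hc (by rw [hh]; exact σ.apply_symm_apply i))]; simp

lemma Pmat_mul_inv (σ : Equiv.Perm (Fin n)) : Pmat n σ⁻¹ * Pmat n σ = 1 := by
  rw [Pmat, Pmat, ← PEquiv.toMatrix_trans, ← Equiv.toPEquiv_trans]
  rw [show σ⁻¹.trans σ = Equiv.refl (Fin n) from Equiv.ext fun x => σ.apply_symm_apply x,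
    Equiv.toPEquiv_refl, PEquiv.toMatrix_refl]

/-- Sign-corrected permutation matrix, an element of `SU(n)`. -/
noncomputable def permSU [NeZero n] (σ : Equiv.Perm (Fin n)) : SU n := by
  refine ⟨Pmat n σ * Wmat n σ, ?_⟩
  rw [mem_specialUnitaryGroup_iff]
  constructor
  · rw [Matrix.mem_unitaryGroup_iff']
    calc star (Pmat n σ * Wmat n σ) * (Pmat n σ * Wmat n σ)
        = star (Wmat n σ) * (star (Pmat n σ) * Pmat n σ) * Wmat n σ := by
          rw [Matrix.star_mul]; noncomm_ring
      _ = 1 := by rw [Pmat_star, Pmat_mul_inv, mul_one, Wmat_star, Wmat_mul_self]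
  · have hdP : (Pmat n σ).det = signC σ := Matrix.det_permutation σ
    have hdW : (Wmat n σ).det = signC σ := by
      rw [Wmat, Matrix.det_diagonal]
      rw [Finset.prod_eq_single 0 (fun b _ hb => by simp [hb]) (by simp)]
      simp
    rw [Matrix.det_mul, hdP, hdW, signC_mul_self]

lemma permSU_conj_diagMat [NeZero n] (σ : Equiv.Perm (Fin n)) (lam : Fin n → ℝ) :
    conjMat (permSU σ) (diagMat lam) = diagMat (lam ∘ σ) := by
  rw [conjMat, SU.inv_coe]
  have hcoe : ((permSU σ : SU n) : Mat n) = Pmat n σ * Wmat n σ := rfl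
  have hWDW : Wmat n σ * diagMat lam * Wmat n σ = diagMat lam := by
    rw [Wmat, diagMat, Matrix.diagonal_mul_diagonal, Matrix.diagonal_mul_diagonal]
    ext i j
    rcases eq_or_ne i j with rfl | hij
    · rcases eq_or_ne i 0 with rfl | h0
      · rw [Matrix.diagonal_apply_eq, Matrix.diagonal_apply_eq, if_pos rfl,
          show signC σ * ((lam 0 : ℂ) * Complex.I) * signC σ
            = ((lam 0 : ℂ) * Complex.I) * (signC σ * signC σ) from by ring,
          signC_mul_self, mul_one]
      · simp [h0]
    · simp [Matrix.diagonal_apply_ne _ hij]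
  rw [hcoe, Matrix.star_mul, Wmat_star, Pmat_star]
  calc Pmat n σ * Wmat n σ * diagMat lam * (Wmat n σ * Pmat n σ⁻¹)
      = Pmat n σ * (Wmat n σ * diagMat lam * Wmat n σ) * Pmat n σ⁻¹ := by noncomm_ring
    _ = Pmat n σ * diagMat lam * Pmat n σ⁻¹ := by rw [hWDW]
    _ = diagMat (lam ∘ σ) := by
        rw [Pmat, Pmat, diagMat, PEquiv.toMatrix_toPEquiv_mul, PEquiv.mul_toMatrix_toPEquiv]
        rw [show (σ⁻¹).symm = σ from rfl]
        rw [Matrix.submatrix_submatrix, Function.comp_id, Function.id_comp,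
          Matrix.submatrix_diagonal _ _ σ.injective]
        rfl

lemma act_permSU [NeZero n] (σ : Equiv.Perm (Fin n)) (lam : Fin n → ℝ) :
    act (permSU σ) (Esu lam) = Esu (lam ∘ σ) := by
  apply Subtype.ext
  show conjMat (permSU σ) (diagMat (prv lam)) = diagMat (prv (lam ∘ σ))
  rw [permSU_conj_diagMat, prv_comp]

end Perm
section Spectral
variable {n : ℕ}

lemma su_spectral [NeZero n] (x : su n) :
    ∃ (U : SU n) (lam : Fin n → ℝ), (∑ j, lam j = 0) ∧ x = act U (Esu lam) := by
  classical
  obtain ⟨hskew, htr⟩ := x.2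
  have hH : (Complex.I • (x : Mat n)).IsHermitian := by
    rw [Matrix.IsHermitian, Matrix.conjTranspose_smul, hskew]
    simp [Complex.star_def, Complex.conj_I]
  set V : Mat n := (hH.eigenvectorUnitary : Mat n) with hV
  have hVmem := hH.eigenvectorUnitary.2
  have hVV : star V * V = 1 := Matrix.mem_unitaryGroup_iff'.mp hVmem
  have hVV' : V * star V = 1 := Matrix.mem_unitaryGroup_iff.mp hVmem
  set lam : Fin n → ℝ := fun j => -(hH.eigenvalues j) with hlam
  have hdiag : (x : Mat n) = V * diagMat lam * star V := by
    have hspec := hH.spectral_theorem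
    have h0 : (x : Mat n) = (-Complex.I) • (Complex.I • (x : Mat n)) := by
      rw [smul_smul]; simp
    have hfun : (-Complex.I) • (RCLike.ofReal ∘ hH.eigenvalues : Fin n → ℂ)
        = (fun j => ((lam j : ℝ) : ℂ) * Complex.I) := by
      funext j
      have h : ((RCLike.ofReal ∘ hH.eigenvalues) j : ℂ) = ((hH.eigenvalues j : ℝ) : ℂ) := rfl
      rw [Pi.smul_apply, h, hlam, smul_eq_mul]
      push_cast
      ring
    rw [h0, hspec, Unitary.conjStarAlgAut_apply, ← Matrix.smul_mul, ← Matrix.mul_smul, ← Matrix.diagonal_smul, hfun]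
    rfl
  have hsum : ∑ j, lam j = 0 := by
    have h1 : Matrix.trace (V * diagMat lam * star V) = Matrix.trace (diagMat lam) := by
      rw [Matrix.trace_mul_cycle, hVV, Matrix.one_mul]
    have h2 : Matrix.trace (diagMat lam) = ((∑ j, lam j : ℝ) : ℂ) * Complex.I := by
      rw [diagMat, Matrix.trace_diagonal, ← Finset.sum_mul]
      push_cast
      rfl
    rw [← hdiag, htr] at h1
    rw [h2] at h1
    have h3 : ((∑ j, lam j : ℝ) : ℂ) = 0 := by
      rcases mul_eq_zero.mp h1.symm with h | h
      · exact h
      · exact absurd h Complex.I_ne_zero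
    exact_mod_cast h3
  -- correct the determinant
  set c : ℂ := V.det with hc
  have hcc : star c * c = 1 := by
    have := congrArg Matrix.det hVV
    rw [Matrix.det_mul, Matrix.det_one, Matrix.star_eq_conjTranspose,
      Matrix.det_conjTranspose] at this
    exact this
  set eps : Fin n → ℂ := fun j => if j = 0 then star c else 1 with heps
  set W : Mat n := Matrix.diagonal eps with hW
  have key : ∀ z : ℂ, star c * z * c = z := by
    intro z; rw [show star c * z * c = z * (star c * c) from by ring, hcc, mul_one]
  have hWstar : star W = Matrix.diagonal (fun j => if j = 0 then c else 1) := by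
    rw [hW, Matrix.star_eq_conjTranspose, Matrix.diagonal_conjTranspose]
    ext i j
    rcases eq_or_ne i j with rfl | hij
    · by_cases h0 : i = 0 <;> simp [heps, h0]
    · simp [Matrix.diagonal_apply_ne _ hij]
  have hWW' : W * star W = 1 := by
    rw [hWstar, hW, Matrix.diagonal_mul_diagonal]
    ext i j
    rcases eq_or_ne i j with rfl | hij
    · rw [Matrix.diagonal_apply_eq, Matrix.one_apply_eq]
      simp only [heps]
      split_ifs with h0
      · exact hcc
      · rw [one_mul]
    · simp [Matrix.diagonal_apply_ne _ hij, Matrix.one_apply_ne hij]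
  have hWDW : W * diagMat lam * star W = diagMat lam := by
    rw [hWstar, hW, diagMat, Matrix.diagonal_mul_diagonal, Matrix.diagonal_mul_diagonal]
    ext i j
    rcases eq_or_ne i j with rfl | hij
    · rw [Matrix.diagonal_apply_eq, Matrix.diagonal_apply_eq]
      simp only [heps]
      split_ifs with h0
      · exact key _
      · rw [one_mul, mul_one]
    · simp [Matrix.diagonal_apply_ne _ hij]
  set U : Mat n := V * W with hU
  have hUmem : U ∈ SU n := by
    rw [mem_specialUnitaryGroup_iff]
    constructor
    · rw [Matrix.mem_unitaryGroup_iff]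
      calc V * W * star (V * W) = V * (W * star W) * star V := by
            rw [Matrix.star_mul]; noncomm_ring
        _ = 1 := by rw [hWW', mul_one, hVV']
    · have hdW : W.det = star c := by
        rw [hW, Matrix.det_diagonal]
        rw [Finset.prod_eq_single 0 (fun b _ hb => by simp [heps, hb]) (by simp)]
        simp [heps]
      rw [Matrix.det_mul, ← hc, hdW, mul_comm]
      exact hcc
  refine ⟨⟨U, hUmem⟩, lam, hsum, ?_⟩
  apply Subtype.ext
  show (x : Mat n) = conjMat ⟨U, hUmem⟩ (Esu lam : Mat n)
  rw [conjMat, SU.inv_coe]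
  have : ((⟨U, hUmem⟩ : SU n) : Mat n) = U := rfl
  rw [this, Esu_coe hsum, hU, Matrix.star_mul]
  calc (x : Mat n) = V * diagMat lam * star V := hdiag
    _ = V * (W * diagMat lam * star W) * star V := by rw [hWDW]
    _ = V * W * diagMat lam * (star W * star V) := by noncomm_ring

end Spectral
section Sigma
variable {n : ℕ}

lemma conjMat_inv_mul (U : SU n) : ((U : Mat n))⁻¹ * (U : Mat n) = 1 := by
  rw [SU.inv_coe]; exact SU.star_mul_self U

lemma conjMat_mul (U : SU n) (A B : Mat n) :
    conjMat U A * conjMat U B = conjMat U (A * B) := by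
  rw [conjMat, conjMat, conjMat]
  calc (U : Mat n) * A * (U : Mat n)⁻¹ * ((U : Mat n) * B * (U : Mat n)⁻¹)
      = (U : Mat n) * A * ((U : Mat n)⁻¹ * (U : Mat n)) * (B * (U : Mat n)⁻¹) := by
        noncomm_ring
    _ = (U : Mat n) * (A * B) * (U : Mat n)⁻¹ := by
        rw [conjMat_inv_mul, Matrix.mul_one]; noncomm_ring

lemma trace_conjMat (U : SU n) (A : Mat n) : (conjMat U A).trace = A.trace := by
  rw [conjMat, Matrix.trace_mul_cycle, conjMat_inv_mul, Matrix.one_mul]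

lemma sigma3_mem (n : ℕ) : sigma3 n ∈ InvTrilinSpace n := by
  have cyc : ∀ A B C : Mat n, (A * B * C).trace = (C * A * B).trace :=
    fun A B C => by rw [Matrix.trace_mul_cycle]
  refine ⟨?_, ?_, ?_, ?_, ?_, ?_, ?_, ?_, ?_⟩
  · intro x y z
    simp only [sigma3]
    rw [cyc (y : Mat n) (x : Mat n) (z : Mat n), cyc (z : Mat n) (y : Mat n) (x : Mat n),
      cyc (y : Mat n) (z : Mat n) (x : Mat n)]
    exact congrArg Complex.re (by ring)
  · intro x y z
    simp only [sigma3]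
    exact congrArg Complex.re (by ring)
  · intro x x' y z
    simp only [sigma3, Submodule.coe_add, Matrix.add_mul, Matrix.trace_add]
    rw [← Complex.add_re]
    exact congrArg Complex.re (by ring)
  · intro r x y z
    simp only [sigma3, SetLike.val_smul, Matrix.smul_mul, Matrix.trace_smul, Complex.real_smul]
    rw [show Complex.I * ((r : ℂ) * ((x : Mat n) * (y : Mat n) * (z : Mat n)).trace
        + (r : ℂ) * ((x : Mat n) * (z : Mat n) * (y : Mat n)).trace)
      = (r : ℂ) * (Complex.I * (((x : Mat n) * (y : Mat n) * (z : Mat n)).trace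
        + ((x : Mat n) * (z : Mat n) * (y : Mat n)).trace)) from by ring]
    exact Complex.re_ofReal_mul _ _
  · intro x y y' z
    simp only [sigma3, Submodule.coe_add, Matrix.add_mul, Matrix.mul_add, Matrix.trace_add]
    rw [← Complex.add_re]
    exact congrArg Complex.re (by ring)
  · intro r x y z
    simp only [sigma3, SetLike.val_smul, Matrix.smul_mul, Matrix.mul_smul, Matrix.trace_smul,
      Complex.real_smul]
    rw [show Complex.I * ((r : ℂ) * ((x : Mat n) * (y : Mat n) * (z : Mat n)).trace
        + (r : ℂ) * ((x : Mat n) * (z : Mat n) * (y : Mat n)).trace)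
      = (r : ℂ) * (Complex.I * (((x : Mat n) * (y : Mat n) * (z : Mat n)).trace
        + ((x : Mat n) * (z : Mat n) * (y : Mat n)).trace)) from by ring]
    exact Complex.re_ofReal_mul _ _
  · intro x y z z'
    simp only [sigma3, Submodule.coe_add, Matrix.add_mul, Matrix.mul_add, Matrix.trace_add]
    rw [← Complex.add_re]
    exact congrArg Complex.re (by ring)
  · intro r x y z
    simp only [sigma3, SetLike.val_smul, Matrix.smul_mul, Matrix.mul_smul, Matrix.trace_smul,
      Complex.real_smul]
    rw [show Complex.I * ((r : ℂ) * ((x : Mat n) * (y : Mat n) * (z : Mat n)).trace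
        + (r : ℂ) * ((x : Mat n) * (z : Mat n) * (y : Mat n)).trace)
      = (r : ℂ) * (Complex.I * (((x : Mat n) * (y : Mat n) * (z : Mat n)).trace
        + ((x : Mat n) * (z : Mat n) * (y : Mat n)).trace)) from by ring]
    exact Complex.re_ofReal_mul _ _
  · intro U x y z
    simp only [sigma3]
    have hx : ((act U x : su n) : Mat n) = conjMat U (x : Mat n) := rfl
    have hy : ((act U y : su n) : Mat n) = conjMat U (y : Mat n) := rfl
    have hz : ((act U z : su n) : Mat n) = conjMat U (z : Mat n) := rfl
    rw [hx, hy, hz, conjMat_mul, conjMat_mul, conjMat_mul, conjMat_mul,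
      trace_conjMat, trace_conjMat]

lemma sigma3_diag [NeZero n] (lam : Fin n → ℝ) (h : ∑ j, lam j = 0) :
    sigma3 n (Esu lam, Esu lam, Esu lam) = 2 * ∑ j, (lam j)^3 := by
  simp only [sigma3]
  rw [Esu_coe h, diagMat, Matrix.diagonal_mul_diagonal, Matrix.diagonal_mul_diagonal,
    Matrix.trace_diagonal]
  have hterm : ∀ j : Fin n, (lam j : ℂ) * Complex.I * ((lam j : ℂ) * Complex.I)
      * ((lam j : ℂ) * Complex.I) = -((((lam j)^3 : ℝ)) : ℂ) * Complex.I := by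
    intro j
    push_cast
    linear_combination ((lam j : ℂ)^3 * Complex.I) * Complex.I_mul_I
  have hsum2 : (∑ j, (lam j : ℂ) * Complex.I * ((lam j : ℂ) * Complex.I)
      * ((lam j : ℂ) * Complex.I)) = -(((∑ j, (lam j)^3 : ℝ)) : ℂ) * Complex.I := by
    rw [Finset.sum_congr rfl (fun j _ => hterm j), ← Finset.sum_mul]
    push_cast
    rw [← Finset.sum_neg_distrib]
  rw [hsum2]
  rw [show Complex.I * (-(((∑ j, (lam j)^3 : ℝ)) : ℂ) * Complex.I
      + -(((∑ j, (lam j)^3 : ℝ)) : ℂ) * Complex.I) = (((2 * ∑ j, (lam j)^3 : ℝ)) : ℂ) from by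
    push_cast
    linear_combination (-(2 * (∑ j, ((lam j : ℂ))^3))) * Complex.I_mul_I]
  exact Complex.ofReal_re _

end Sigma
section PermExist
variable {α : Type*} [DecidableEq α]

lemma exists_perm3 {a b c a' b' c' : α} (hab : a ≠ b) (hac : a ≠ c) (hbc : b ≠ c)
    (hab' : a' ≠ b') (hac' : a' ≠ c') (hbc' : b' ≠ c') :
    ∃ σ : Equiv.Perm α, σ a = a' ∧ σ b = b' ∧ σ c = c' := by
  classical
  set σ1 := Equiv.swap a a' with hσ1
  have h1a : σ1 a = a' := Equiv.swap_apply_left a a'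
  set b1 := σ1 b with hb1
  have hb1a' : b1 ≠ a' := by
    rw [hb1, ← h1a]
    exact σ1.injective.ne (Ne.symm hab)
  set σ2 := Equiv.swap b1 b' with hσ2
  have h2a : σ2 a' = a' := Equiv.swap_apply_of_ne_of_ne (Ne.symm hb1a') hab'
  have h2b : σ2 b1 = b' := Equiv.swap_apply_left b1 b'
  set c2 := σ2 (σ1 c) with hc2
  have hc2a' : c2 ≠ a' := by
    rw [hc2, ← h2a, ← h1a]
    exact (σ2.injective.comp σ1.injective).ne (Ne.symm hac)
  have hc2b' : c2 ≠ b' := by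
    rw [hc2, ← h2b, hb1]
    exact (σ2.injective.comp σ1.injective).ne (Ne.symm hbc)
  set σ3 := Equiv.swap c2 c' with hσ3
  refine ⟨(σ1.trans σ2).trans σ3, ?_, ?_, ?_⟩
  · show σ3 (σ2 (σ1 a)) = a'
    rw [h1a, h2a]
    exact Equiv.swap_apply_of_ne_of_ne (Ne.symm hc2a') hac'
  · show σ3 (σ2 (σ1 b)) = b'
    rw [← hb1, h2b]
    exact Equiv.swap_apply_of_ne_of_ne (Ne.symm hc2b') hbc'
  · show σ3 (σ2 (σ1 c)) = c'
    rw [← hc2]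
    exact Equiv.swap_apply_left c2 c'

lemma exists_perm2 {a b a' b' : α} (hab : a ≠ b) (hab' : a' ≠ b') :
    ∃ σ : Equiv.Perm α, σ a = a' ∧ σ b = b' := by
  classical
  set σ1 := Equiv.swap a a' with hσ1
  have h1a : σ1 a = a' := Equiv.swap_apply_left a a'
  set b1 := σ1 b with hb1
  have hb1a' : b1 ≠ a' := by
    rw [hb1, ← h1a]
    exact σ1.injective.ne (Ne.symm hab)
  set σ2 := Equiv.swap b1 b' with hσ2
  have h2a : σ2 a' = a' := Equiv.swap_apply_of_ne_of_ne (Ne.symm hb1a') hab'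
  have h2b : σ2 b1 = b' := Equiv.swap_apply_left b1 b'
  refine ⟨σ1.trans σ2, ?_, ?_⟩
  · show σ2 (σ1 a) = a'
    rw [h1a, h2a]
  · show σ2 (σ1 b) = b'
    rw [← hb1, h2b]

end PermExist

section Expand
variable {n : ℕ} {τ : ↥(su n) × ↥(su n) × ↥(su n) → ℝ}

lemma Esu_sum [NeZero n] {ι : Type*} (s : Finset ι) (f : ι → (Fin n → ℝ)) :
    Esu (∑ j ∈ s, f j) = ∑ j ∈ s, Esu (f j) := by
  classical
  induction s using Finset.cons_induction with
  | empty => simpa using Esu_zero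
  | cons a s ha ih => rw [Finset.sum_cons, Finset.sum_cons, Esu_add, ih]

lemma Esu_decomp [NeZero n] (v : Fin n → ℝ) :
    Esu v = ∑ j, v j • Esu (Pi.single j 1) := by
  conv_lhs => rw [show v = ∑ j, Pi.single j (v j) from (Finset.univ_sum_single v).symm]
  rw [Esu_sum]
  refine Finset.sum_congr rfl fun j _ => ?_
  rw [← Esu_smul]
  congr 1
  funext m
  simp [Pi.single_apply]

lemma tri_expand [NeZero n] (hτ : IsSymmTrilinInv n τ) (lam mu nu : Fin n → ℝ) :
    τ (Esu lam, Esu mu, Esu nu) = ∑ j, ∑ k, ∑ l, lam j * mu k * nu l *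
      τ (Esu (Pi.single j 1), Esu (Pi.single k 1), Esu (Pi.single l 1)) := by
  obtain ⟨h1, h2, h3, h4, h5, h6, h7, h8, h9⟩ := hτ
  have hτ' : IsSymmTrilinInv n τ := ⟨h1, h2, h3, h4, h5, h6, h7, h8, h9⟩
  calc τ (Esu lam, Esu mu, Esu nu)
      = ∑ j, lam j * τ (Esu (Pi.single j 1), Esu mu, Esu nu) := by
        rw [Esu_decomp lam, tri_sum₁ hτ']
        exact Finset.sum_congr rfl fun j _ => h4 _ _ _ _
    _ = ∑ j, lam j * ∑ k, mu k * τ (Esu (Pi.single j 1), Esu (Pi.single k 1), Esu nu) := by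
        refine Finset.sum_congr rfl fun j _ => ?_
        congr 1
        rw [Esu_decomp mu, tri_sum₂ hτ']
        exact Finset.sum_congr rfl fun k _ => h6 _ _ _ _
    _ = ∑ j, lam j * ∑ k, mu k * ∑ l, nu l *
          τ (Esu (Pi.single j 1), Esu (Pi.single k 1), Esu (Pi.single l 1)) := by
        refine Finset.sum_congr rfl fun j _ => ?_
        congr 1
        refine Finset.sum_congr rfl fun k _ => ?_
        congr 1
        rw [Esu_decomp nu, tri_sum₃ hτ']
        exact Finset.sum_congr rfl fun l _ => h8 _ _ _ _
    _ = ∑ j, ∑ k, ∑ l, lam j * mu k * nu l *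
          τ (Esu (Pi.single j 1), Esu (Pi.single k 1), Esu (Pi.single l 1)) := by
        simp only [Finset.mul_sum]
        refine Finset.sum_congr rfl fun j _ => Finset.sum_congr rfl fun k _ =>
          Finset.sum_congr rfl fun l _ => by ring

end Expand
section SumId
variable {n : ℕ}

lemma sum3_identity (lam : Fin n → ℝ) (h : ∑ j, lam j = 0) (a b d : ℝ) :
    ∑ j, ∑ k, ∑ l, lam j * lam k * lam l *
      (a + (b - a) * ((if j = k then (1:ℝ) else 0) + (if j = l then 1 else 0)
        + (if k = l then 1 else 0))
        + (d - 3*b + 2*a) * ((if j = k then (1:ℝ) else 0) * (if k = l then 1 else 0)))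
    = (d - 3*b + 2*a) * ∑ j, (lam j)^3 := by
  classical
  have step1 : ∀ j k l : Fin n, lam j * lam k * lam l *
      (a + (b - a) * ((if j = k then (1:ℝ) else 0) + (if j = l then 1 else 0)
        + (if k = l then 1 else 0))
        + (d - 3*b + 2*a) * ((if j = k then (1:ℝ) else 0) * (if k = l then 1 else 0)))
      = a * (lam j * lam k * lam l)
        + (b - a) * (if j = k then lam j * lam k * lam l else 0)
        + (b - a) * (if j = l then lam j * lam k * lam l else 0)
        + (b - a) * (if k = l then lam j * lam k * lam l else 0)
        + (d - 3*b + 2*a) *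
            (if j = k then (if k = l then lam j * lam k * lam l else 0) else 0) := by
    intro j k l
    split_ifs <;> ring
  rw [Finset.sum_congr rfl fun j _ => Finset.sum_congr rfl fun k _ =>
    Finset.sum_congr rfl fun l _ => step1 j k l]
  simp only [Finset.sum_add_distrib, ← Finset.mul_sum]
  have eA : ∑ j : Fin n, ∑ k : Fin n, lam j * lam k * ∑ l : Fin n, lam l = 0 := by
    simp [h]
  have eB1 : ∑ j, ∑ k, ∑ l, (if j = k then lam j * lam k * lam l else 0) = 0 := by
    have h1 : ∀ j k : Fin n, ∑ l, (if j = k then lam j * lam k * lam l else 0) = 0 := by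
      intro j k
      by_cases hc : j = k
      · simp only [if_pos hc]
        rw [← Finset.mul_sum, h, mul_zero]
      · simp [hc]
    simp [h1]
  have eB2 : ∑ j, ∑ k, ∑ l, (if j = l then lam j * lam k * lam l else 0) = 0 := by
    have h1 : ∀ j k : Fin n, ∑ l, (if j = l then lam j * lam k * lam l else 0)
        = lam j * lam k * lam j := by
      intro j k
      rw [Finset.sum_ite_eq Finset.univ j (fun l => lam j * lam k * lam l)]
      simp
    have h2 : ∀ j : Fin n, ∑ k, lam j * lam k * lam j = 0 := by
      intro j
      rw [Finset.sum_congr rfl fun k _ =>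
        show lam j * lam k * lam j = lam j * lam j * lam k from by ring,
        ← Finset.mul_sum, h, mul_zero]
    simp [h1, h2]
  have eB3 : ∑ j, ∑ k, ∑ l, (if k = l then lam j * lam k * lam l else 0) = 0 := by
    have h1 : ∀ j k : Fin n, ∑ l, (if k = l then lam j * lam k * lam l else 0)
        = lam j * lam k * lam k := by
      intro j k
      rw [Finset.sum_ite_eq Finset.univ k (fun l => lam j * lam k * lam l)]
      simp
    have h2 : ∀ j : Fin n, ∑ k, lam j * lam k * lam k
        = lam j * ∑ k, lam k * lam k := by
      intro j
      rw [Finset.mul_sum]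
      exact Finset.sum_congr rfl fun k _ => by ring
    have h3 : ∑ j, lam j * ∑ k, lam k * lam k = 0 := by
      rw [← Finset.sum_mul, h, zero_mul]
    simp only [h1, h2]
    exact h3
  have eC : ∑ j, ∑ k, ∑ l,
      (if j = k then (if k = l then lam j * lam k * lam l else 0) else 0)
      = ∑ j, (lam j)^3 := by
    have h1 : ∀ j k : Fin n, ∑ l, (if j = k then (if k = l then lam j * lam k * lam l else 0)
        else 0) = if j = k then lam j * lam k * lam k else 0 := by
      intro j k
      by_cases hc : j = k
      · simp only [if_pos hc]
        rw [Finset.sum_ite_eq Finset.univ k (fun l => lam j * lam k * lam l)]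
        simp
      · simp [hc]
    have h2 : ∀ j : Fin n, ∑ k, (if j = k then lam j * lam k * lam k else 0)
        = (lam j)^3 := by
      intro j
      rw [Finset.sum_ite_eq Finset.univ j (fun k => lam j * lam k * lam k)]
      simp
      ring
    simp only [h1, h2]
  rw [eA, eB1, eB2, eB3, eC]
  ring

end SumId
section Master
variable {n : ℕ} {τ : ↥(su n) × ↥(su n) × ↥(su n) → ℝ}

lemma invariant_diag_value [NeZero n] (hn : 3 ≤ n) (hτ : IsSymmTrilinInv n τ) :
    ∃ c : ℝ, ∀ lam : Fin n → ℝ, ∑ j, lam j = 0 →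
      τ (Esu lam, Esu lam, Esu lam) = c * ∑ j, (lam j)^3 := by
  classical
  set t : Fin n → Fin n → Fin n → ℝ :=
    fun j k l => τ (Esu (Pi.single j 1), Esu (Pi.single k 1), Esu (Pi.single l 1)) with ht
  have h9 := hτ.2.2.2.2.2.2.2.2
  have hperm : ∀ (σ : Equiv.Perm (Fin n)) (j k l : Fin n), t j k l = t (σ j) (σ k) (σ l) := by
    intro σ j k l
    have hsg : ∀ j : Fin n, (Pi.single (σ j) 1 : Fin n → ℝ) ∘ σ = Pi.single j 1 := by
      intro j; funext m
      simp [Pi.single_apply, Function.comp, σ.injective.eq_iff]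
    have hkey := h9 (permSU σ) (Esu (Pi.single (σ j) 1)) (Esu (Pi.single (σ k) 1))
      (Esu (Pi.single (σ l) 1))
    rw [act_permSU, act_permSU, act_permSU, hsg, hsg, hsg] at hkey
    simp only [ht]
    exact hkey
  set i0 : Fin n := ⟨0, by omega⟩ with hi0
  set i1 : Fin n := ⟨1, by omega⟩ with hi1
  set i2 : Fin n := ⟨2, by omega⟩ with hi2
  have h01 : i0 ≠ i1 := by simp [hi0, hi1, Fin.ext_iff]
  have h02 : i0 ≠ i2 := by simp [hi0, hi2, Fin.ext_iff]
  have h12 : i1 ≠ i2 := by simp [hi1, hi2, Fin.ext_iff]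
  set a := t i0 i1 i2 with ha
  set b := t i0 i0 i1 with hb
  set d := t i0 i0 i0 with hd
  have tsym1 : ∀ j k l, t j k l = t k j l := fun j k l => hτ.1 _ _ _
  have tsym2 : ∀ j k l, t j k l = t j l k := fun j k l => hτ.2.1 _ _ _
  have hall : ∀ j, t j j j = d := by
    intro j
    have := hperm (Equiv.swap i0 j) i0 i0 i0
    rw [Equiv.swap_apply_left] at this
    exact this.symm
  have hpair : ∀ j l, j ≠ l → t j j l = b := by
    intro j l hjl
    obtain ⟨σ, hσ0, hσ1⟩ := exists_perm2 h01 hjl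
    have := hperm σ i0 i0 i1
    rw [hσ0, hσ1] at this
    exact this.symm
  have hdist : ∀ j k l, j ≠ k → j ≠ l → k ≠ l → t j k l = a := by
    intro j k l hjk hjl hkl
    obtain ⟨σ, hσ0, hσ1, hσ2⟩ := exists_perm3 h01 h02 h12 hjk hjl hkl
    have := hperm σ i0 i1 i2
    rw [hσ0, hσ1, hσ2] at this
    exact this.symm
  have hpattern : ∀ j k l, t j k l = a + (b - a) * ((if j = k then (1:ℝ) else 0)
      + (if j = l then 1 else 0) + (if k = l then 1 else 0))
      + (d - 3*b + 2*a) * ((if j = k then (1:ℝ) else 0) * (if k = l then 1 else 0)) := by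
    intro j k l
    by_cases hjk : j = k
    · by_cases hkl : k = l
      · rw [hjk, hkl, hall l]
        simp only [eq_self_iff_true, if_true, if_pos rfl]
        ring
      · have hjl : ¬ j = l := by rw [hjk]; exact hkl
        rw [hjk, hpair k l hkl]
        simp only [eq_self_iff_true, if_true, if_pos rfl, if_neg hkl]
        ring
    · by_cases hkl : k = l
      · have hjl : ¬ j = l := by rw [← hkl]; exact hjk
        have hstep : t j k l = t k l j := by rw [tsym1 j k l, tsym2 k j l]
        rw [hstep, hkl, hpair l j (fun hE => hjl hE.symm)]
        simp only [eq_self_iff_true, if_true, if_pos rfl, if_neg hjk, if_neg hjl]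
        ring
      · by_cases hjl : j = l
        · have hstep : t j k l = t j l k := tsym2 j k l
          have hlk : ¬ l = k := fun hE => hkl hE.symm
          rw [hstep, hjl, hpair l k hlk]
          simp only [eq_self_iff_true, if_true, if_pos rfl, if_neg hlk, if_neg hkl]
          ring
        · rw [hdist j k l hjk hjl hkl]
          simp only [if_neg hjk, if_neg hjl, if_neg hkl]
          ring
  refine ⟨d - 3*b + 2*a, fun lam hlam => ?_⟩
  rw [tri_expand hτ lam lam lam]
  have hcongr : ∑ j, ∑ k, ∑ l, lam j * lam k * lam l *
      τ (Esu (Pi.single j 1), Esu (Pi.single k 1), Esu (Pi.single l 1))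
      = ∑ j, ∑ k, ∑ l, lam j * lam k * lam l *
        (a + (b - a) * ((if j = k then (1:ℝ) else 0) + (if j = l then 1 else 0)
          + (if k = l then 1 else 0))
          + (d - 3*b + 2*a) * ((if j = k then (1:ℝ) else 0) * (if k = l then 1 else 0))) :=
    Finset.sum_congr rfl fun j _ => Finset.sum_congr rfl fun k _ =>
      Finset.sum_congr rfl fun l _ => by rw [← hpattern j k l]
  rw [hcongr, sum3_identity lam hlam a b d]

end Master
/-- For `n ≥ 3`, the real vector space of `SU(n)`-invariant symmetric
trilinear forms on `su(n)` is one-dimensional, spanned by `σ`. -/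
theorem invariant_trilinear_forms_spanned_by_sigma (n : ℕ) (hn : 3 ≤ n) :
    Module.finrank ℝ (InvTrilinSpace n) = 1 ∧
    InvTrilinSpace n = Submodule.span ℝ {sigma3 n} := by
  classical
  have hNZ : NeZero n := ⟨by omega⟩
  have hσmem := sigma3_mem n
  -- a test vector showing `sigma3 n ≠ 0`
  set i0 : Fin n := ⟨0, by omega⟩ with hi0
  set i1 : Fin n := ⟨1, by omega⟩ with hi1
  set i2 : Fin n := ⟨2, by omega⟩ with hi2
  have h01 : i0 ≠ i1 := by simp [hi0, hi1, Fin.ext_iff]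
  have h02 : i0 ≠ i2 := by simp [hi0, hi2, Fin.ext_iff]
  have h12 : i1 ≠ i2 := by simp [hi1, hi2, Fin.ext_iff]
  set lam0 : Fin n → ℝ :=
    fun j => if j = i0 then 1 else if j = i1 then 1 else if j = i2 then -2 else 0 with hlam0
  have hout : ∀ x : Fin n, x ∉ ({i0, i1, i2} : Finset (Fin n)) → lam0 x = 0 := by
    intro x hx
    simp only [Finset.mem_insert, Finset.mem_singleton, not_or] at hx
    simp [hlam0, hx.1, hx.2.1, hx.2.2]
  have hnotmem1 : i0 ∉ ({i1, i2} : Finset (Fin n)) := by simp [h01, h02]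
  have hnotmem2 : i1 ∉ ({i2} : Finset (Fin n)) := by simp [h12]
  have hl0sum : ∑ j, lam0 j = 0 := by
    rw [← Finset.sum_subset (Finset.subset_univ ({i0, i1, i2} : Finset (Fin n)))
      (fun x _ hx => hout x hx)]
    rw [Finset.sum_insert hnotmem1, Finset.sum_insert hnotmem2, Finset.sum_singleton]
    simp [hlam0, h01, h02, h12, Ne.symm h01, Ne.symm h02, Ne.symm h12]
    norm_num
  have hl0cube : ∑ j, (lam0 j)^3 = -6 := by
    rw [← Finset.sum_subset (Finset.subset_univ ({i0, i1, i2} : Finset (Fin n)))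
      (fun x _ hx => by rw [hout x hx]; norm_num)]
    rw [Finset.sum_insert hnotmem1, Finset.sum_insert hnotmem2, Finset.sum_singleton]
    simp [hlam0, h01, h02, h12, Ne.symm h01, Ne.symm h02, Ne.symm h12]
    norm_num
  have hσne : sigma3 n ≠ 0 := by
    intro h0
    have hval := sigma3_diag lam0 hl0sum
    rw [h0, hl0cube] at hval
    simp at hval
  have hspan : InvTrilinSpace n = Submodule.span ℝ {sigma3 n} := by
    apply le_antisymm
    · intro τ hτmem
      have hτ : IsSymmTrilinInv n τ := hτmem
      obtain ⟨c, hc⟩ := invariant_diag_value hn hτ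
      rw [Submodule.mem_span_singleton]
      refine ⟨c / 2, ?_⟩
      have hτ'mem : (τ - (c/2) • sigma3 n) ∈ InvTrilinSpace n :=
        Submodule.sub_mem _ hτmem (Submodule.smul_mem _ _ hσmem)
      have hτ' : IsSymmTrilinInv n (τ - (c/2) • sigma3 n) := hτ'mem
      have hcube : ∀ x : su n, (τ - (c/2) • sigma3 n) (x, x, x) = 0 := by
        intro x
        obtain ⟨U, lam, hlsum, hx⟩ := su_spectral x
        have h9 := hτ'.2.2.2.2.2.2.2.2
        rw [hx, h9 U]
        have hτval := hc lam hlsum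
        have hσval := sigma3_diag lam hlsum
        simp only [Pi.sub_apply, Pi.smul_apply, smul_eq_mul]
        rw [hτval, hσval]
        ring
      have hzero := tri_polarize hτ' hcube
      funext p
      obtain ⟨x, y, z⟩ := p
      have hz := hzero x y z
      simp only [Pi.sub_apply, Pi.smul_apply, smul_eq_mul] at hz
      simp only [Pi.smul_apply, smul_eq_mul]
      linarith
    · rw [Submodule.span_le, Set.singleton_subset_iff]
      exact hσmem
  refine ⟨?_, hspan⟩
  rw [hspan]
  exact finrank_span_singleton hσne
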